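/- Let l > 0 and q > 1, and set γ = 2q - 1. Define H : ℝ≥0 → ℝ by H(t) = t^γ for 0 ≤ t ≤ l and H(t) = l^{q-1}(q l^{q-1} t - (q-1) l^q) for t > l, and F : ℝ≥0 → ℝ by F(t) = t^q for 0 ≤ t ≤ l and F(t) = q l^{q-1} t - (q-1) l^q for t > l. Then for all t ∈ ℝ≥0 with t ≠ l: q·H(t) = F(t)·F'(t), (F'(t))² ≤ q·H'(t), and F(t)² ≥ t·H(t). -/

import Mathlib

/-!
Below `l` both functions are pure powers, `F = t ^ q` and `H = t ^ (2q - 1)`, and the three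
relations are exponent bookkeeping `q + (q - 1) = 2q - 1`, `2(q - 1) = (2q - 1) - 1`,
`1 + (2q - 1) = 2q`, together with `q ≤ 2q - 1`. Above `l`, `F` is the tangent line of `t ^ q`
at `l` and `H = l ^ (q - 1) F`; the first two relations become identities, and the third
reduces to `F(t) ≥ l ^ (q - 1) t`, which holds since the difference is
`(q - 1) l ^ (q - 1) (t - l) ≥ 0`.
-/

open Filter

namespace Real

theorem rpow_truncation_relations {q t : ℝ} (hq : 1 < q) (ht : 0 ≤ t) :
    q * t ^ (2 * q - 1) = t ^ q * (q * t ^ (q - 1)) ∧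
      (q * t ^ (q - 1)) ^ 2 ≤ q * ((2 * q - 1) * t ^ (2 * q - 1 - 1)) ∧
      t * t ^ (2 * q - 1) ≤ (t ^ q) ^ 2 := by
  have split (a b : ℝ) (hab : a + b ≠ 0) : t ^ (a + b) = t ^ a * t ^ b := rpow_add' ht hab
  refine ⟨?_, ?_, ?_⟩
  · rw [show 2 * q - 1 = q + (q - 1) by ring, split _ _ (by linarith)]
    ring
  · have hcoeff : q ^ 2 ≤ q * (2 * q - 1) := by nlinarith
    calc (q * t ^ (q - 1)) ^ 2 = q ^ 2 * t ^ (2 * q - 1 - 1) := by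
          rw [show 2 * q - 1 - 1 = (q - 1) + (q - 1) by ring, split _ _ (by linarith)]
          ring
      _ ≤ q * ((2 * q - 1) * t ^ (2 * q - 1 - 1)) := by
          rw [← mul_assoc]
          exact mul_le_mul_of_nonneg_right hcoeff (rpow_nonneg ht _)
  · apply le_of_eq
    calc t * t ^ (2 * q - 1) = t ^ (1 + (2 * q - 1)) := by
          rw [split _ _ (by linarith), rpow_one]
      _ = (t ^ q) ^ 2 := by
          rw [show 1 + (2 * q - 1) = q + q by ring, split _ _ (by linarith), sq]

theorem mul_rpow_sub_one_le_tangent {l q t : ℝ} (hl : 0 < l) (hq : 1 ≤ q) (ht : l ≤ t) :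
    t * l ^ (q - 1) ≤ q * l ^ (q - 1) * t - (q - 1) * l ^ q := by
  have hlq : l ^ q = l ^ (q - 1) * l := by
    rw [← rpow_add_one hl.ne', sub_add_cancel]
  have hgap : 0 ≤ (q - 1) * l ^ (q - 1) * (t - l) :=
    mul_nonneg (mul_nonneg (by linarith) (rpow_nonneg hl.le _)) (by linarith)
  rw [hlq]
  linarith

theorem tangent_truncation_relations {l q t : ℝ} (hl : 0 < l) (hq : 1 ≤ q) (ht : l ≤ t) :
    q * (l ^ (q - 1) * (q * l ^ (q - 1) * t - (q - 1) * l ^ q)) =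
        (q * l ^ (q - 1) * t - (q - 1) * l ^ q) * (q * l ^ (q - 1)) ∧
      (q * l ^ (q - 1)) ^ 2 ≤ q * (l ^ (q - 1) * (q * l ^ (q - 1))) ∧
      t * (l ^ (q - 1) * (q * l ^ (q - 1) * t - (q - 1) * l ^ q)) ≤
        (q * l ^ (q - 1) * t - (q - 1) * l ^ q) ^ 2 := by
  refine ⟨by ring, le_of_eq (by ring), ?_⟩
  have htangent := mul_rpow_sub_one_le_tangent hl hq ht
  have hlower : 0 ≤ t * l ^ (q - 1) :=
    mul_nonneg (hl.le.trans ht) (rpow_nonneg hl.le _)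
  rw [← mul_assoc, sq]
  exact mul_le_mul_of_nonneg_right htangent (hlower.trans htangent)

end Real

/-- Properties of the truncation functions `H` and `F` used in the Moser iteration
argument: for `l > 0`, `q > 1`, `γ = 2q - 1`, and all `t ≥ 0` with `t ≠ l`,
`q·H(t) = F(t)·F'(t)`, `(F'(t))² ≤ q·H'(t)` and `F(t)² ≥ t·H(t)`. -/
theorem stmt1 (l q γ : ℝ) (hl : 0 < l) (hq : 1 < q) (hγ : γ = 2 * q - 1)
    (H F : ℝ → ℝ)
    (hH : ∀ t : ℝ, (t ≤ l → H t = t ^ γ) ∧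
      (l < t → H t = l ^ (q - 1) * (q * l ^ (q - 1) * t - (q - 1) * l ^ q)))
    (hF : ∀ t : ℝ, (t ≤ l → F t = t ^ q) ∧
      (l < t → F t = q * l ^ (q - 1) * t - (q - 1) * l ^ q)) :
    ∀ t : ℝ, 0 ≤ t → t ≠ l →
      q * H t = F t * deriv F t ∧
      (deriv F t) ^ 2 ≤ q * deriv H t ∧
      t * H t ≤ (F t) ^ 2 := by
  subst hγ
  intro t ht0 htl
  rcases htl.lt_or_gt with hlt | hgt
  · have hFeq : F =ᶠ[nhds t] fun x => x ^ q :=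
      eventuallyEq_of_mem (Iio_mem_nhds hlt) fun x hx => (hF x).1 (le_of_lt hx)
    have hHeq : H =ᶠ[nhds t] fun x => x ^ (2 * q - 1) :=
      eventuallyEq_of_mem (Iio_mem_nhds hlt) fun x hx => (hH x).1 (le_of_lt hx)
    rw [hFeq.deriv_eq, hHeq.deriv_eq, (Real.hasDerivAt_rpow_const (Or.inr hq.le)).deriv,
      (Real.hasDerivAt_rpow_const (Or.inr (by linarith))).deriv, (hF t).1 hlt.le,
      (hH t).1 hlt.le]
    exact Real.rpow_truncation_relations hq ht0
  · set a := q * l ^ (q - 1)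
    have hFeq : F =ᶠ[nhds t] fun x => a * x - (q - 1) * l ^ q :=
      eventuallyEq_of_mem (Ioi_mem_nhds hgt) fun x hx => (hF x).2 hx
    have hHeq : H =ᶠ[nhds t] fun x => l ^ (q - 1) * (a * x - (q - 1) * l ^ q) :=
      eventuallyEq_of_mem (Ioi_mem_nhds hgt) fun x hx => (hH x).2 hx
    have hFderiv : HasDerivAt (fun x => a * x - (q - 1) * l ^ q) a t := by
      simpa using ((hasDerivAt_id t).const_mul a).sub_const ((q - 1) * l ^ q)
    rw [hFeq.deriv_eq, hHeq.deriv_eq, hFderiv.deriv, (hFderiv.const_mul _).deriv,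
      (hF t).2 hgt, (hH t).2 hgt]
    exact Real.tangent_truncation_relations hl hq.le hgt.le
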